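/- arXiv:2011.04419 — 2 statements merged into one kernel-verified Lean document; each statement's English description precedes it below -/
import Mathlib

section
/- Let h : ℝ^d → ℝ^m satisfy h(z) ≠ 0 for all z ∈ ℝ^d, and define sim[q, q'] := qᵀq'/(‖q‖·‖q'‖). Let D be a probability distribution over (x, y) ∈ ℝ^d × {0,1} in which both labels occur with positive probability, with input marginal D_x and class-conditional input distributions D₀, D₁; let D_{x̃} be a probability measure on ℝ^d, D_α a probability measure on ℝ, and δ : ℝ^d × ℝ^d → ℝ^d a map. With independent draws x̃, x̃', x̃'' ∼ D_{x̃} and α, α', α'' ∼ D_α, set x⁺ := x + α·δ(x, x̃), x⁺⁺ := x + α'·δ(x, x̃'), x⁻ := x̄ + α''·δ(x̄, x̃''). Let ρ̄(y) := Pr_{(x', y') ∼ D}(y' ≠ y). For y ∈ {0,1} define π_{y,y'}(a, b) := a if y = y' and := b otherwise, w̃ := ‖h(x⁺)‖^{-1}·( ‖h(π_{y,1}(x⁺⁺, x⁻))‖^{-1}·h(π_{y,1}(x⁺⁺, x⁻)) − ‖h(π_{y,0}(x⁺⁺, x⁻))‖^{-1}·h(π_{y,0}(x⁺⁺, x⁻))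 ), and f(x⁺) := h(x⁺)ᵀ w̃. Then, assuming all the expectations below are finite, E_{x, x̄ ∼ D_x; x̃, x̃', x̃'' ∼ D_{x̃}; α, α', α'' ∼ D_α}[ ℓ_cont(x⁺, x⁺⁺, x⁻) ] = E_{(x, y) ∼ D; x̄ ∼ D_{1−y}; x̃, x̃', x̃'' ∼ D_{x̃}; α, α', α'' ∼ D_α}[ ρ̄(y)·ℓ( f(x⁺), y ) ] + E_y[ (1 − ρ̄(y))·ℰ_y ], where ℰ_y := E_{x, x̄ ∼ D_y; x̃, x̃', x̃'' ∼ D_{x̃}; α, α', α'' ∼ D_α}[ log( 1 + exp( −(h(x⁺)/‖h(x⁺)‖)ᵀ( h(x⁺⁺)/‖h(x⁺⁺)‖ − h(x⁻)/‖h(x⁻)‖ ) ) ) ]. -/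
/-!
With the normalized similarity, `ℓ_cont(x⁺, x⁺⁺, x⁻) = log (1 + exp (-(sim⁺ - sim⁻)))`, where
`sim⁺ = sim[h(x⁺), h(x⁺⁺)]` and `sim⁻ = sim[h(x⁺), h(x⁻)]`. Since `f(x⁺) = ±(sim⁺ - sim⁻)`, the
sign being fixed by the label `y`, and `ℓ(q, 1) = log (1 + exp (-q))`, `ℓ(q, 0) = log (1 + exp q)`,
both classification integrands and the integrand of `ℰ_y` are pointwise equal to the contrastive
loss. The theorem then reduces to splitting the law of `(x, x̄)` under the mixture `Dx ⊗ Dx` into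
its four label pairs.
-/

open MeasureTheory
open scoped RealInnerProductSpace

/-- The binary cross-entropy loss. -/
noncomputable def bce (q y : ℝ) : ℝ :=
  -y * Real.log (1 / (1 + Real.exp (-q))) -
    (1 - y) * Real.log (1 - 1 / (1 + Real.exp (-q)))

/-- Normalized cosine similarity `sim[q,q'] = qᵀq'/(‖q‖·‖q'‖)`. -/
noncomputable def simN {m : ℕ} (q q' : EuclideanSpace ℝ (Fin m)) : ℝ :=
  ⟪q, q'⟫ / (‖q‖ * ‖q'‖)

/-- The contrastive loss with normalized similarity. -/
noncomputable def lcontN {d m : ℕ} (h : (Fin d → ℝ) → EuclideanSpace ℝ (Fin m))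
    (xp xpp xm : Fin d → ℝ) : ℝ :=
  -Real.log (Real.exp (simN (h xp) (h xpp)) /
    (Real.exp (simN (h xp) (h xpp)) + Real.exp (simN (h xp) (h xm))))

/-- The classification loss `ℓ(f(x⁺), y)` with `f(x⁺) := h(x⁺)ᵀ w̃`,
`w̃ := ‖h(x⁺)‖⁻¹·( ‖h(π_{y,1})‖⁻¹·h(π_{y,1}) − ‖h(π_{y,0})‖⁻¹·h(π_{y,0}) )`, where
`π_{y,1} = x⁺⁺, π_{y,0} = x⁻` if `y = 1` and `π_{y,1} = x⁻, π_{y,0} = x⁺⁺` if `y = 0`. -/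
noncomputable def clsN {d m : ℕ} (h : (Fin d → ℝ) → EuclideanSpace ℝ (Fin m))
    (y : ℝ) (xp xpp xm : Fin d → ℝ) : ℝ :=
  let a := if y = 1 then xpp else xm
  let b := if y = 1 then xm else xpp
  let wt : EuclideanSpace ℝ (Fin m) := ‖h xp‖⁻¹ • (‖h a‖⁻¹ • h a - ‖h b‖⁻¹ • h b)
  bce ⟪h xp, wt⟫ y

/-- `log(1 + exp(−(h(x⁺)/‖h(x⁺)‖)ᵀ( h(x⁺⁺)/‖h(x⁺⁺)‖ − h(x⁻)/‖h(x⁻)‖ )))`. -/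
noncomputable def etermN {d m : ℕ} (h : (Fin d → ℝ) → EuclideanSpace ℝ (Fin m))
    (xp xpp xm : Fin d → ℝ) : ℝ :=
  Real.log (1 + Real.exp
    (-⟪‖h xp‖⁻¹ • h xp, ‖h xpp‖⁻¹ • h xpp - ‖h xm‖⁻¹ • h xm⟫))

/-- Sample space for `(x, x̄, x̃, x̃', x̃'', α, α', α'')`. -/
abbrev Omega8 (d : ℕ) : Type :=
  (Fin d → ℝ) × (Fin d → ℝ) × (Fin d → ℝ) × (Fin d → ℝ) × (Fin d → ℝ) × ℝ × ℝ × ℝ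

/-- The joint law of `(x, x̄, x̃, x̃', x̃'', α, α', α'')` with `x ∼ A`, `x̄ ∼ B`,
`x̃, x̃', x̃'' ∼ Dxt` and `α, α', α'' ∼ Da`, all independent. -/
noncomputable def prodD {d : ℕ} (A B Dxt : Measure (Fin d → ℝ)) (Da : Measure ℝ) :
    Measure (Omega8 d) :=
  A.prod (B.prod (Dxt.prod (Dxt.prod (Dxt.prod (Da.prod (Da.prod Da))))))

/-- `x⁺ := x + α·δ(x, x̃)`. -/
def XP8 {d : ℕ} (δ : (Fin d → ℝ) → (Fin d → ℝ) → (Fin d → ℝ)) (p : Omega8 d) : Fin d → ℝ :=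
  p.1 + p.2.2.2.2.2.1 • δ p.1 p.2.2.1

/-- `x⁺⁺ := x + α'·δ(x, x̃')`. -/
def XPP8 {d : ℕ} (δ : (Fin d → ℝ) → (Fin d → ℝ) → (Fin d → ℝ)) (p : Omega8 d) : Fin d → ℝ :=
  p.1 + p.2.2.2.2.2.2.1 • δ p.1 p.2.2.2.1

/-- `x⁻ := x̄ + α''·δ(x̄, x̃'')`. -/
def XM8 {d : ℕ} (δ : (Fin d → ℝ) → (Fin d → ℝ) → (Fin d → ℝ)) (p : Omega8 d) : Fin d → ℝ :=
  p.2.1 + p.2.2.2.2.2.2.2 • δ p.2.1 p.2.2.2.2.1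

open Real
open scoped ENNReal

lemma neg_log_exp_div_exp_add_exp (a b : ℝ) :
    -log (exp a / (exp a + exp b)) = log (1 + exp (-(a - b))) := by
  have hpos : 0 < exp a + exp b := by positivity
  have hratio : 1 + exp (-(a - b)) = (exp a + exp b) / exp a := by
    rw [neg_sub, exp_sub]; field_simp
  rw [hratio, log_div (exp_ne_zero a) hpos.ne', log_div hpos.ne' (exp_ne_zero a)]
  ring

lemma bce_one (q : ℝ) : bce q 1 = log (1 + exp (-q)) := by
  simp [bce]

lemma bce_zero (q : ℝ) : bce q 0 = log (1 + exp q) := by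
  have hpos : 0 < 1 + exp (-q) := by positivity
  have hcompl : 1 - 1 / (1 + exp (-q)) = exp (-q) / (1 + exp (-q)) := by
    field_simp; ring
  have hscale : 1 + exp q = (1 + exp (-q)) * exp q := by
    rw [add_mul, ← exp_add]; simp [add_comm]
  simp only [bce, hcompl, log_div (exp_ne_zero _) hpos.ne', hscale,
    log_mul hpos.ne' (exp_ne_zero _), log_exp]
  ring

lemma inner_inv_norm_smul_sub {m : ℕ} (x y z : EuclideanSpace ℝ (Fin m)) :
    ⟪x, ‖x‖⁻¹ • (‖y‖⁻¹ • y - ‖z‖⁻¹ • z)⟫ = simN x y - simN x z := by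
  simp only [real_inner_smul_right, inner_sub_right, simN]
  ring

section Pointwise

variable {d m : ℕ} (h : (Fin d → ℝ) → EuclideanSpace ℝ (Fin m)) (xp xpp xm : Fin d → ℝ)

lemma lcontN_eq_log_one_add_exp :
    lcontN h xp xpp xm = log (1 + exp (-(simN (h xp) (h xpp) - simN (h xp) (h xm)))) :=
  neg_log_exp_div_exp_add_exp _ _

lemma clsN_one_eq_lcontN : clsN h 1 xp xpp xm = lcontN h xp xpp xm := by
  simp only [clsN, if_true, inner_inv_norm_smul_sub, bce_one, lcontN_eq_log_one_add_exp]

lemma clsN_zero_eq_lcontN : clsN h 0 xp xpp xm = lcontN h xp xpp xm := by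
  simp only [clsN, zero_ne_one, if_false, inner_inv_norm_smul_sub, bce_zero,
    lcontN_eq_log_one_add_exp, neg_sub]

lemma etermN_eq_lcontN : etermN h xp xpp xm = lcontN h xp xpp xm := by
  rw [etermN, real_inner_smul_left, ← real_inner_smul_right, inner_inv_norm_smul_sub,
    lcontN_eq_log_one_add_exp]

end Pointwise

section Mixture

variable {α : Type*} [MeasurableSpace α] {μ ν : Measure α} {a b : ℝ}

lemma MeasureTheory.Integrable.ofReal_smul_add_ofReal_smul {f : α → ℝ} (hμ : Integrable f μ)
    (hν : Integrable f ν) :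
    Integrable f (ENNReal.ofReal a • μ + ENNReal.ofReal b • ν) :=
  (hμ.smul_measure ENNReal.ofReal_ne_top).add_measure (hν.smul_measure ENNReal.ofReal_ne_top)

lemma integral_ofReal_smul_add_ofReal_smul {f : α → ℝ} (ha : 0 ≤ a) (hb : 0 ≤ b)
    (hμ : Integrable f μ) (hν : Integrable f ν) :
    ∫ x, f x ∂(ENNReal.ofReal a • μ + ENNReal.ofReal b • ν)
      = a * ∫ x, f x ∂μ + b * ∫ x, f x ∂ν := by
  rw [integral_add_measure (hμ.smul_measure ENNReal.ofReal_ne_top)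
      (hν.smul_measure ENNReal.ofReal_ne_top),
    integral_smul_measure, integral_smul_measure, ENNReal.toReal_ofReal ha,
    ENNReal.toReal_ofReal hb, smul_eq_mul, smul_eq_mul]

end Mixture

section ProdD

variable {d : ℕ} (c₁ c₀ : ℝ≥0∞) (A₁ A₀ B Dxt : Measure (Fin d → ℝ)) (Da : Measure ℝ)
  [SFinite A₁] [SFinite A₀] [SFinite B] [SFinite Dxt] [SFinite Da]

lemma prodD_smul_add_smul_left :
    prodD (c₁ • A₁ + c₀ • A₀) B Dxt Da = c₁ • prodD A₁ B Dxt Da + c₀ • prodD A₀ B Dxt Da := by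
  simp only [prodD, Measure.add_prod, Measure.prod_smul_left]

lemma prodD_smul_add_smul_right :
    prodD B (c₁ • A₁ + c₀ • A₀) Dxt Da = c₁ • prodD B A₁ Dxt Da + c₀ • prodD B A₀ Dxt Da := by
  simp only [prodD, Measure.add_prod, Measure.prod_add, Measure.prod_smul_left,
    Measure.prod_smul_right]

lemma prodD_smul_add_smul :
    prodD (c₁ • A₁ + c₀ • A₀) (c₁ • A₁ + c₀ • A₀) Dxt Da
      = c₁ • (c₁ • prodD A₁ A₁ Dxt Da + c₀ • prodD A₁ A₀ Dxt Da)
        + c₀ • (c₁ • prodD A₀ A₁ Dxt Da + c₀ • prodD A₀ A₀ Dxt Da) := by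
  rw [prodD_smul_add_smul_left, prodD_smul_add_smul_right, prodD_smul_add_smul_right]

end ProdD

/-- The label `y` is `1` with probability `p1`, so `Dx = p1·D1 + (1−p1)·D0`, `ρ̄(1) = 1 − p1`,
`ρ̄(0) = p1`, and the expectations over `y` are written out over the two labels. -/
theorem stmt6_general {d m : ℕ}
    (h : (Fin d → ℝ) → EuclideanSpace ℝ (Fin m))
    (D0 D1 Dxt : Measure (Fin d → ℝ)) (Da : Measure ℝ)
    [IsProbabilityMeasure D0] [IsProbabilityMeasure D1] [IsProbabilityMeasure Dxt]
    [IsProbabilityMeasure Da]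
    (p1 : ℝ) (hp0 : 0 < p1) (hp1 : p1 < 1)
    (δ : (Fin d → ℝ) → (Fin d → ℝ) → (Fin d → ℝ))
    (hI2 : Integrable (fun p : Omega8 d => clsN h 1 (XP8 δ p) (XPP8 δ p) (XM8 δ p))
      (prodD D1 D0 Dxt Da))
    (hI3 : Integrable (fun p : Omega8 d => clsN h 0 (XP8 δ p) (XPP8 δ p) (XM8 δ p))
      (prodD D0 D1 Dxt Da))
    (hI4 : Integrable (fun p : Omega8 d => etermN h (XP8 δ p) (XPP8 δ p) (XM8 δ p))
      (prodD D1 D1 Dxt Da))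
    (hI5 : Integrable (fun p : Omega8 d => etermN h (XP8 δ p) (XPP8 δ p) (XM8 δ p))
      (prodD D0 D0 Dxt Da)) :
    ∫ p, lcontN h (XP8 δ p) (XPP8 δ p) (XM8 δ p)
        ∂(prodD (ENNReal.ofReal p1 • D1 + ENNReal.ofReal (1 - p1) • D0)
          (ENNReal.ofReal p1 • D1 + ENNReal.ofReal (1 - p1) • D0) Dxt Da)
      = (p1 * (1 - p1) *
            ∫ p, clsN h 1 (XP8 δ p) (XPP8 δ p) (XM8 δ p) ∂(prodD D1 D0 Dxt Da)
          + (1 - p1) * p1 *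
            ∫ p, clsN h 0 (XP8 δ p) (XPP8 δ p) (XM8 δ p) ∂(prodD D0 D1 Dxt Da))
        + (p1 * p1 *
            ∫ p, etermN h (XP8 δ p) (XPP8 δ p) (XM8 δ p) ∂(prodD D1 D1 Dxt Da)
          + (1 - p1) * (1 - p1) *
            ∫ p, etermN h (XP8 δ p) (XPP8 δ p) (XM8 δ p) ∂(prodD D0 D0 Dxt Da)) := by
  simp_rw [clsN_one_eq_lcontN, clsN_zero_eq_lcontN, etermN_eq_lcontN] at hI2 hI3 hI4 hI5 ⊢
  have hq0 : 0 ≤ 1 - p1 := by linarith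
  rw [prodD_smul_add_smul, integral_ofReal_smul_add_ofReal_smul hp0.le hq0
      (hI4.ofReal_smul_add_ofReal_smul hI2) (hI3.ofReal_smul_add_ofReal_smul hI5),
    integral_ofReal_smul_add_ofReal_smul hp0.le hq0 hI4 hI2,
    integral_ofReal_smul_add_ofReal_smul hp0.le hq0 hI3 hI5]
  ring

/-- Theorem 1 of the paper. The label `y ∈ {0,1}` takes value `1` with probability `p1 ∈ (0,1)`;
the class-conditional input laws are `D1, D0`, and the input marginal is the mixture
`Dx = p1·D1 + (1−p1)·D0`, so `ρ̄(1) = 1 − p1` and `ρ̄(0) = p1`.  The expected contrastive loss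
(over `x, x̄ ∼ Dx` and the noise variables) equals
`E_{(x,y)∼D, x̄∼D_{1−y}}[ρ̄(y)·ℓ(f(x⁺),y)] + E_y[(1 − ρ̄(y))·ℰ_y]`, written out by expanding the
expectation over the two-point label distribution. -/
theorem stmt6 {d m : ℕ}
    (h : (Fin d → ℝ) → EuclideanSpace ℝ (Fin m)) (hh : ∀ z, h z ≠ 0)
    (D0 D1 Dxt : Measure (Fin d → ℝ)) (Da : Measure ℝ)
    [IsProbabilityMeasure D0] [IsProbabilityMeasure D1] [IsProbabilityMeasure Dxt]
    [IsProbabilityMeasure Da]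
    (p1 : ℝ) (hp0 : 0 < p1) (hp1 : p1 < 1)
    (δ : (Fin d → ℝ) → (Fin d → ℝ) → (Fin d → ℝ))
    (hI1 : Integrable (fun p : Omega8 d => lcontN h (XP8 δ p) (XPP8 δ p) (XM8 δ p))
      (prodD (ENNReal.ofReal p1 • D1 + ENNReal.ofReal (1 - p1) • D0)
        (ENNReal.ofReal p1 • D1 + ENNReal.ofReal (1 - p1) • D0) Dxt Da))
    (hI2 : Integrable (fun p : Omega8 d => clsN h 1 (XP8 δ p) (XPP8 δ p) (XM8 δ p))
      (prodD D1 D0 Dxt Da))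
    (hI3 : Integrable (fun p : Omega8 d => clsN h 0 (XP8 δ p) (XPP8 δ p) (XM8 δ p))
      (prodD D0 D1 Dxt Da))
    (hI4 : Integrable (fun p : Omega8 d => etermN h (XP8 δ p) (XPP8 δ p) (XM8 δ p))
      (prodD D1 D1 Dxt Da))
    (hI5 : Integrable (fun p : Omega8 d => etermN h (XP8 δ p) (XPP8 δ p) (XM8 δ p))
      (prodD D0 D0 Dxt Da)) :
    ∫ p, lcontN h (XP8 δ p) (XPP8 δ p) (XM8 δ p)
        ∂(prodD (ENNReal.ofReal p1 • D1 + ENNReal.ofReal (1 - p1) • D0)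
          (ENNReal.ofReal p1 • D1 + ENNReal.ofReal (1 - p1) • D0) Dxt Da)
      = (p1 * (1 - p1) *
            ∫ p, clsN h 1 (XP8 δ p) (XPP8 δ p) (XM8 δ p) ∂(prodD D1 D0 Dxt Da)
          + (1 - p1) * p1 *
            ∫ p, clsN h 0 (XP8 δ p) (XPP8 δ p) (XM8 δ p) ∂(prodD D0 D1 Dxt Da))
        + (p1 * p1 *
            ∫ p, etermN h (XP8 δ p) (XPP8 δ p) (XM8 δ p) ∂(prodD D1 D1 Dxt Da)
          + (1 - p1) * (1 - p1) *
            ∫ p, etermN h (XP8 δ p) (XPP8 δ p) (XM8 δ p) ∂(prodD D0 D0 Dxt Da)) :=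
  stmt6_general h D0 D1 Dxt Da p1 hp0 hp1 δ hI2 hI3 hI4 hI5
end

section
/- (Gaussian-noise regularization identity, linear model.) Let y ∈ {0,1}, w ∈ ℝ^d, x ∈ ℝ^d, σ > 0, and let x̃ ∼ N(0, σ²·I_d) be a standard isotropic Gaussian random vector scaled by σ. For α > 0 set x⁺ := x + α·x̃. Then E_{x̃}[ ℓ(wᵀx⁺, y) ] = ℓ(wᵀx, y) + σ²·(α²/2)·ψ'(wᵀx)·‖w‖² + r(α), where ψ'(q) = ψ(q)(1−ψ(q)) and there exists a constant C (depending only on σ and ‖w‖) such that |r(α)| ≤ C·α³ for all α > 0. -/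
/-!
As a function of the logit, `bce t y = log (1 + exp t) - y t` is smooth with second derivative
`ψ (1 - ψ)` and third derivative `ψ (1 - ψ) (1 - 2ψ)`, bounded by `1/4`. The projection `wᵀx̃`
of the isotropic Gaussian is a centred Gaussian of variance `σ² ‖w‖²` (compare characteristic
functions). Taking expectations in the second-order Taylor expansion of the loss at `wᵀx` kills
the linear term, turns the quadratic term into the regularizer, and leaves a remainder of size at
most `α³ / 24 · E |wᵀx̃|³`.
-/

open MeasureTheory ProbabilityTheory

/-- The logistic function `ψ(q) = exp(q)/(1+exp(q))`. -/
noncomputable def psi (q : ℝ) : ℝ := Real.exp q / (1 + Real.exp q)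

open Real
open scoped NNReal Nat

lemma abs_le_of_abs_deriv_le_pow_of_nonneg {g g' : ℝ → ℝ} {M : ℝ} {n : ℕ}
    (hg : ∀ t, HasDerivAt g (g' t) t) (hg0 : g 0 = 0) (hbound : ∀ t, |g' t| ≤ M * |t| ^ n / n !)
    {u : ℝ} (hu : 0 ≤ u) : |g u| ≤ M * |u| ^ (n + 1) / (n + 1)! := by
  have hB : ∀ t, HasDerivAt (fun t => M * t ^ (n + 1) / (n + 1)!) (M * t ^ n / n !) t := by
    intro t
    refine (((hasDerivAt_pow (n + 1) t).const_mul M).div_const ((n + 1)! : ℝ)).congr_deriv ?_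
    rw [Nat.factorial_succ]
    push_cast
    field_simp
  have := image_norm_le_of_norm_deriv_right_le_deriv_boundary (a := 0) (b := u)
    (fun t _ => (hg t).continuousAt.continuousWithinAt) (fun t _ => (hg t).hasDerivWithinAt)
    (by simp [hg0]) hB (fun t ht => by simpa [abs_of_nonneg ht.1] using hbound t)
    (Set.right_mem_Icc.2 hu)
  simpa [abs_of_nonneg hu] using this

lemma abs_le_of_abs_deriv_le_pow {g g' : ℝ → ℝ} {M : ℝ} {n : ℕ}
    (hg : ∀ t, HasDerivAt g (g' t) t) (hg0 : g 0 = 0) (hbound : ∀ t, |g' t| ≤ M * |t| ^ n / n !)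
    (u : ℝ) : |g u| ≤ M * |u| ^ (n + 1) / (n + 1)! := by
  rcases le_total 0 u with hu | hu
  · exact abs_le_of_abs_deriv_le_pow_of_nonneg hg hg0 hbound hu
  · have hneg : ∀ t, HasDerivAt (fun t => g (-t)) (-g' (-t)) t := fun t => by
      simpa using (hg (0 - t)).comp_const_sub 0 t
    simpa using abs_le_of_abs_deriv_le_pow_of_nonneg hneg (by simpa using hg0)
      (fun t => by simpa using hbound (-t)) (neg_nonneg.2 hu)

lemma abs_sub_taylor_two_le {f f' f'' f''' : ℝ → ℝ} {M : ℝ}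
    (hf : ∀ t, HasDerivAt f (f' t) t) (hf' : ∀ t, HasDerivAt f' (f'' t) t)
    (hf'' : ∀ t, HasDerivAt f'' (f''' t) t) (hM : ∀ t, |f''' t| ≤ M) (q u : ℝ) :
    |f (q + u) - f q - u * f' q - u ^ 2 / 2 * f'' q| ≤ M * |u| ^ 3 / 6 := by
  have h0 : ∀ t, |f'' (q + t) - f'' q| ≤ M * |t| ^ 1 / 1 ! := by
    simpa using abs_le_of_abs_deriv_le_pow (n := 0)
      (fun t => ((hf'' (q + t)).comp_const_add q t).sub_const (f'' q))
      (by simp) (fun t => by simpa using hM (q + t))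
  have h1 : ∀ t, |f' (q + t) - f' q - t * f'' q| ≤ M * |t| ^ 2 / 2 ! :=
    abs_le_of_abs_deriv_le_pow (n := 1)
      (fun t => (((hf' (q + t)).comp_const_add q t).sub_const (f' q)).sub
        (hasDerivAt_mul_const (f'' q)))
      (by simp) h0
  have h2 := abs_le_of_abs_deriv_le_pow (n := 2)
    (g := fun t => f (q + t) - f q - t * f' q - t ^ 2 / 2 * f'' q)
    (fun t => by
      refine (((((hf (q + t)).comp_const_add q t).sub_const (f q)).sub
        (hasDerivAt_mul_const (f' q))).sub
        (((hasDerivAt_pow 2 t).div_const 2).mul_const (f'' q))).congr_deriv ?_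
      push_cast
      ring)
    (by simp) h1 u
  simpa [Nat.factorial] using h2

lemma abs_integral_comp_add_mul_sub_taylor_two_le {ν : Measure ℝ} [IsProbabilityMeasure ν]
    (hν : MemLp id 3 ν) {f f' f'' f''' : ℝ → ℝ} {M : ℝ}
    (hf : ∀ t, HasDerivAt f (f' t) t) (hf' : ∀ t, HasDerivAt f' (f'' t) t)
    (hf'' : ∀ t, HasDerivAt f'' (f''' t) t) (hM : ∀ t, |f''' t| ≤ M) (q a : ℝ) :
    |∫ t, f (q + a * t) ∂ν - (f q + a * f' q * ∫ t, t ∂ν + a ^ 2 / 2 * f'' q * ∫ t, t ^ 2 ∂ν)|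
      ≤ M * |a| ^ 3 / 6 * ∫ t, |t| ^ 3 ∂ν := by
  set R : ℝ → ℝ := fun t => f (q + a * t) - f q - a * t * f' q - (a * t) ^ 2 / 2 * f'' q
  have hR : ∀ t, |R t| ≤ M * |a| ^ 3 / 6 * |t| ^ 3 := fun t =>
    calc |R t| ≤ M * |a * t| ^ 3 / 6 := abs_sub_taylor_two_le hf hf' hf'' hM q (a * t)
      _ = M * |a| ^ 3 / 6 * |t| ^ 3 := by rw [abs_mul]; ring
  have hcont : Continuous f := continuous_iff_continuousAt.2 fun t => (hf t).continuousAt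
  have h1 : Integrable (fun t : ℝ => t) ν := hν.integrable (by norm_num)
  have h2 : Integrable (fun t : ℝ => t ^ 2) ν := (hν.mono_exponent (by norm_num)).integrable_sq
  have h3 : Integrable (fun t : ℝ => |t| ^ 3) ν := by
    simpa using hν.integrable_norm_pow (p := 3) (by norm_num)
  have hRint : Integrable R ν :=
    (h3.const_mul _).mono' (by fun_prop) (ae_of_all _ fun t => hR t)
  have hsplit : ∫ t, f (q + a * t) ∂ν
      = f q + a * f' q * ∫ t, t ∂ν + a ^ 2 / 2 * f'' q * ∫ t, t ^ 2 ∂ν + ∫ t, R t ∂ν := by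
    have : (fun t => f (q + a * t))
        = fun t => f q + (a * f' q * t + (a ^ 2 / 2 * f'' q * t ^ 2 + R t)) := by
      ext t; simp only [R]; ring
    have h2R : Integrable (fun t => a ^ 2 / 2 * f'' q * t ^ 2 + R t) ν :=
      (h2.const_mul _).fun_add hRint
    rw [this, integral_add (integrable_const _) ((h1.const_mul _).fun_add h2R),
      integral_add (h1.const_mul _) h2R, integral_add (h2.const_mul _) hRint,
      integral_const_mul, integral_const_mul, integral_const, probReal_univ, one_smul]
    ring
  rw [hsplit, add_sub_cancel_left, ← integral_const_mul]
  calc |∫ t, R t ∂ν| ≤ ∫ t, |R t| ∂ν := abs_integral_le_integral_abs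
    _ ≤ ∫ t, M * |a| ^ 3 / 6 * |t| ^ 3 ∂ν := integral_mono hRint.abs (h3.const_mul _) hR

lemma integral_sq_gaussianReal_zero (v : ℝ≥0) : ∫ t, t ^ 2 ∂gaussianReal 0 v = v := by
  simpa [integral_id_gaussianReal] using
    (variance_eq_integral (X := fun t => t) aemeasurable_id').symm.trans
      (variance_fun_id_gaussianReal (μ := 0) (v := v))

lemma map_pi_gaussianReal_sum_mul {ι : Type*} [Fintype ι] (m : ι → ℝ) (v : ι → ℝ≥0)
    (w : ι → ℝ) :
    (Measure.pi fun i => gaussianReal (m i) (v i)).map (fun z => ∑ i, w i * z i)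
      = gaussianReal (∑ i, w i * m i) (∑ i, ‖w i‖₊ ^ 2 * v i) := by
  apply Measure.ext_of_charFun
  ext s
  have hmeas : Measurable fun z : ι → ℝ => ∑ i, w i * z i := by fun_prop
  have hprod : ∀ z : ι → ℝ, Complex.exp (s * (∑ i, w i * z i : ℝ) * Complex.I)
      = ∏ i, Complex.exp ((s * w i : ℝ) * (z i : ℝ) * Complex.I) := by
    intro z
    rw [← Complex.exp_sum]
    push_cast
    rw [Finset.mul_sum, Finset.sum_mul]
    exact congrArg Complex.exp (Finset.sum_congr rfl fun i _ => by ring)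
  rw [charFun_apply_real, integral_map hmeas.aemeasurable (by fun_prop), charFun_gaussianReal]
  simp_rw [hprod]
  rw [integral_fintype_prod_eq_prod
    (f := fun i (x : ℝ) => Complex.exp ((s * w i : ℝ) * x * Complex.I))]
  simp_rw [← charFun_apply_real, charFun_gaussianReal, ← Complex.exp_sum]
  congr 1
  simp only [NNReal.coe_sum, NNReal.coe_mul, NNReal.coe_pow, coe_nnnorm, Real.norm_eq_abs, sq_abs]
  push_cast
  rw [Finset.mul_sum, Finset.sum_mul, Finset.sum_mul, Finset.sum_div, ← Finset.sum_sub_distrib]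
  exact Finset.sum_congr rfl fun i _ => by ring

lemma psi_eq_sigmoid : psi = sigmoid := by
  ext q
  rw [psi, sigmoid_def, exp_neg]
  field_simp
  ring

lemma bce_eq_log_one_add_exp_sub (t y : ℝ) : bce t y = log (1 + exp t) - y * t := by
  have h : 1 + exp (-t) = (1 + exp t) * exp (-t) := by rw [exp_neg]; field_simp; ring
  have hpos : log (sigmoid t) = t - log (1 + exp t) := by
    rw [sigmoid_def, log_inv, h, log_mul (by positivity) (exp_pos _).ne', log_exp]
    ring
  have hneg : log (sigmoid (-t)) = -log (1 + exp t) := by rw [sigmoid_def, neg_neg, log_inv]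
  rw [bce, one_div, ← sigmoid_def, ← sigmoid_neg, hpos, hneg]
  ring

lemma hasDerivAt_bce (y t : ℝ) : HasDerivAt (fun t => bce t y) (sigmoid t - y) t := by
  simp_rw [bce_eq_log_one_add_exp_sub]
  refine ((((hasDerivAt_exp t).const_add 1).log (by positivity)).sub
    ((hasDerivAt_id t).const_mul y)).congr_deriv ?_
  rw [← psi_eq_sigmoid, psi]
  simp

lemma continuous_bce (y : ℝ) : Continuous fun t => bce t y :=
  continuous_iff_continuousAt.2 fun t => (hasDerivAt_bce y t).continuousAt

lemma hasDerivAt_sigmoid_mul_one_sub (t : ℝ) :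
    HasDerivAt (fun t => sigmoid t * (1 - sigmoid t))
      (sigmoid t * (1 - sigmoid t) * (1 - 2 * sigmoid t)) t := by
  refine ((hasDerivAt_sigmoid t).mul ((hasDerivAt_sigmoid t).const_sub 1)).congr_deriv ?_
  ring

lemma abs_sigmoid_mul_one_sub_mul_le (t : ℝ) :
    |sigmoid t * (1 - sigmoid t) * (1 - 2 * sigmoid t)| ≤ 1 / 4 := by
  have h0 := sigmoid_pos t
  have h1 := sigmoid_lt_one t
  rw [abs_le]
  constructor <;> nlinarith [sq_nonneg (sigmoid t - 1 / 2), mul_pos h0 (sub_pos.2 h1)]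

theorem stmt10_general {d : ℕ} (y : ℝ)
    (w x : Fin d → ℝ) (σ : ℝ) :
    ∃ r : ℝ → ℝ,
      (∃ C : ℝ, ∀ a : ℝ, 0 < a → |r a| ≤ C * a ^ 3) ∧
      ∀ a : ℝ, 0 < a →
        ∫ z : Fin d → ℝ, bce (∑ i, w i * (x i + a * z i)) y
            ∂(Measure.pi fun _ : Fin d => gaussianReal 0 (σ ^ 2).toNNReal)
          = bce (∑ i, w i * x i) y
            + σ ^ 2 * (a ^ 2 / 2) *
                (psi (∑ i, w i * x i) * (1 - psi (∑ i, w i * x i))) * (∑ i, w i ^ 2)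
            + r a := by
  set q := ∑ i, w i * x i
  set ν := gaussianReal 0 (∑ i, ‖w i‖₊ ^ 2 * (σ ^ 2).toNNReal)
  have hlaw : (Measure.pi fun _ : Fin d => gaussianReal 0 (σ ^ 2).toNNReal).map
      (fun z => ∑ i, w i * z i) = ν := by
    simpa using map_pi_gaussianReal_sum_mul (fun _ => 0) (fun _ => (σ ^ 2).toNNReal) w
  have hsecond : ∫ t, t ^ 2 ∂ν = σ ^ 2 * ∑ i, w i ^ 2 := by
    simp only [ν, integral_sq_gaussianReal_zero, NNReal.coe_sum, NNReal.coe_mul, NNReal.coe_pow,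
      coe_nnnorm, Real.norm_eq_abs, sq_abs, Real.coe_toNNReal _ (sq_nonneg σ), Finset.mul_sum]
    exact Finset.sum_congr rfl fun i _ => mul_comm _ _
  have hpush : ∀ a, ∫ z : Fin d → ℝ, bce (∑ i, w i * (x i + a * z i)) y
      ∂(Measure.pi fun _ : Fin d => gaussianReal 0 (σ ^ 2).toNNReal)
      = ∫ t, bce (q + a * t) y ∂ν := fun a => by
    have hS : Measurable fun z : Fin d → ℝ => ∑ i, w i * z i := by fun_prop
    rw [← hlaw, integral_map hS.aemeasurable
      ((continuous_bce y).comp' (by fun_prop)).aestronglyMeasurable]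
    simp only [q, mul_add, Finset.sum_add_distrib, Finset.mul_sum, mul_left_comm]
  refine ⟨_, ⟨1 / 4 / 6 * ∫ t, |t| ^ 3 ∂ν, fun a ha => ?_⟩, fun a _ => (add_sub_cancel _ _).symm⟩
  have htaylor := abs_integral_comp_add_mul_sub_taylor_two_le (ν := ν) (memLp_id_gaussianReal 3)
    (hasDerivAt_bce y) (fun t => (hasDerivAt_sigmoid t).sub_const y) hasDerivAt_sigmoid_mul_one_sub
    abs_sigmoid_mul_one_sub_mul_le q a
  rw [integral_id_gaussianReal, hsecond, abs_of_pos ha] at htaylor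
  rw [hpush, psi_eq_sigmoid]
  exact (congrArg abs (by ring)).trans_le (htaylor.trans_eq (by ring))

/-- Gaussian-noise regularization identity for a linear model (Theorem 2(ii)).  With
`x̃ ∼ N(0, σ²·I_d)` (an i.i.d. vector of `N(0,σ²)` coordinates) and `x⁺ := x + α·x̃`,
`E[ℓ(wᵀx⁺, y)] = ℓ(wᵀx, y) + σ²·(α²/2)·ψ'(wᵀx)·‖w‖² + r(α)` where `ψ'(q) = ψ(q)(1−ψ(q))`
and `|r(α)| ≤ C·α³` for all `α > 0`, for some constant `C`. -/
theorem stmt10 {d : ℕ} (y : ℝ) (hy : y = 0 ∨ y = 1)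
    (w x : Fin d → ℝ) (σ : ℝ) (hσ : 0 < σ) :
    ∃ r : ℝ → ℝ,
      (∃ C : ℝ, ∀ a : ℝ, 0 < a → |r a| ≤ C * a ^ 3) ∧
      ∀ a : ℝ, 0 < a →
        ∫ z : Fin d → ℝ, bce (∑ i, w i * (x i + a * z i)) y
            ∂(Measure.pi fun _ : Fin d => gaussianReal 0 (σ ^ 2).toNNReal)
          = bce (∑ i, w i * x i) y
            + σ ^ 2 * (a ^ 2 / 2) *
                (psi (∑ i, w i * x i) * (1 - psi (∑ i, w i * x i))) * (∑ i, w i ^ 2)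
            + r a :=
  stmt10_general y w x σ
end
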